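/- For n → ∞, set N_n = 4(n−1) and let T_n = N_n·( (2(n−1)−1)(√(4/3) + √(8/3)) + 2 ) be the sum of distances of the spherical code obtained from the maximal family of 2(n−1) equiangular lines in ℝ^n with common inner product 1/3. Then the ratio T_n / τ₃(n, N_n) converges to 1/(√6·(√2 − 1)), where τ₃(n, N) = N·√( 2N(n·A₁ + 2(N−n−1)²·B₁) / (n²(n−1)² + 4n(N−n−1)(N−2n)) ), with A₁ = N n³ + (2N−1)n² − (N−1)(7N−2)n + (N−1)²(2N+3) and B₁ = √(n(n−1)N(N−n−1)). -/

import Mathlib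

open Filter

/-- `A₁ = N n³ + (2N−1)n² − (N−1)(7N−2)n + (N−1)²(2N+3)`. -/
noncomputable def A₁ (n N : ℝ) : ℝ :=
  N * n ^ 3 + (2 * N - 1) * n ^ 2 - (N - 1) * (7 * N - 2) * n + (N - 1) ^ 2 * (2 * N + 3)

/-- `B₁ = √(n(n−1)N(N−n−1))`. -/
noncomputable def B₁ (n N : ℝ) : ℝ :=
  Real.sqrt (n * (n - 1) * N * (N - n - 1))

/-- The degree-3 universal upper bound
`τ₃(n, N) = N·√( 2N(n·A₁ + 2(N−n−1)²·B₁) / (n²(n−1)² + 4n(N−n−1)(N−2n)) )`. -/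
noncomputable def tau3 (n N : ℕ) : ℝ :=
  (N : ℝ) * Real.sqrt
    (2 * N * ((n : ℝ) * A₁ n N + 2 * ((N : ℝ) - n - 1) ^ 2 * B₁ n N)
      / ((n : ℝ) ^ 2 * ((n : ℝ) - 1) ^ 2 + 4 * n * ((N : ℝ) - n - 1) * ((N : ℝ) - 2 * n)))

/-- The sum of distances `T_n` of the spherical code obtained from the maximal family of
`2(n−1)` equiangular lines in `ℝⁿ` with common inner product `1/3` (here `N_n = 4(n−1)`). -/
noncomputable def Tlines (n : ℕ) : ℝ :=
  (4 * ((n : ℝ) - 1)) *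
    ((2 * ((n : ℝ) - 1) - 1) * (Real.sqrt (4 / 3) + Real.sqrt (8 / 3)) + 2)

/-!
With `N = 4(n−1)` and `u = 1/n`, both `T_n` and `τ₃(n, N)` are `N·n` times a function of `u`
that is continuous at `u = 0`: for `T_n` it is `(2 − 3u)c + 2u` with `c = √(4/3) + √(8/3)`,
and for `τ₃` it is the square root of the radicand divided by `n²`, which tends to `32` since
`A₁ ~ 4n⁴`, `B₁ ~ 2√3 n²` and the denominator is `~ n⁴`. Hence the ratio tends to
`2c/√32 = (1 + √2)/√6`, and `(√2 + 1)(√2 − 1) = 1`.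
-/

open Real

namespace EquiangularThird

/-- The radicand of `τ₃(n, 4(n−1))` divided by `n²`, written in `u = 1/n`. -/
noncomputable def scaledRadicand (u : ℝ) : ℝ :=
  8 * (1 - u) * (4 + 20 * u - 149 * u ^ 2 + 250 * u ^ 3 - 125 * u ^ 4
      + 4 * u * (1 - u) * (3 - 5 * u) ^ 2 * √(3 - 5 * u))
    / (1 + 22 * u - 87 * u ^ 2 + 80 * u ^ 3)

noncomputable def ratioFun (u : ℝ) : ℝ :=
  ((2 - 3 * u) * (√(4 / 3) + √(8 / 3)) + 2 * u) / √(scaledRadicand u)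

lemma B₁_four_mul_sub_one {x : ℝ} (hx : 1 ≤ x) :
    B₁ x (4 * (x - 1)) = 2 * x ^ 2 * (1 - 1 / x) * √(3 - 5 / x) := by
  have hx0 : x ≠ 0 := by positivity
  have hfactor : 0 ≤ 2 * x ^ 2 * (1 - 1 / x) := by
    have : 1 / x ≤ 1 := by rw [div_le_one₀ (by positivity)]; exact hx
    have : 0 ≤ 1 - 1 / x := by linarith
    positivity
  unfold B₁
  rw [show x * (x - 1) * (4 * (x - 1)) * (4 * (x - 1) - x - 1)
      = (2 * x ^ 2 * (1 - 1 / x)) ^ 2 * (3 - 5 / x) by field_simp; ring,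
    sqrt_mul (sq_nonneg _), sqrt_sq hfactor]

lemma tau3_four_mul_sub_one {n : ℕ} (hn : 1 ≤ n) :
    tau3 n (4 * (n - 1)) = 4 * (n - 1) * n * √(scaledRadicand (1 / n)) := by
  have hx : (1 : ℝ) ≤ n := by exact_mod_cast hn
  have hx0 : (n : ℝ) ≠ 0 := by positivity
  unfold tau3
  push_cast [hn]
  rw [B₁_four_mul_sub_one hx]
  set x : ℝ := (n : ℝ)
  have hnum : 2 * (4 * (x - 1)) * (x * A₁ x (4 * (x - 1))
        + 2 * (4 * (x - 1) - x - 1) ^ 2 * (2 * x ^ 2 * (1 - 1 / x) * √(3 - 5 / x)))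
      = x ^ 4 * (x ^ 2 * (8 * (1 - 1 / x) * (4 + 20 * (1 / x) - 149 * (1 / x) ^ 2
        + 250 * (1 / x) ^ 3 - 125 * (1 / x) ^ 4
        + 4 * (1 / x) * (1 - 1 / x) * (3 - 5 * (1 / x)) ^ 2 * √(3 - 5 * (1 / x))))) := by
    unfold A₁; field_simp; ring
  have hden : x ^ 2 * (x - 1) ^ 2 + 4 * x * (4 * (x - 1) - x - 1) * (4 * (x - 1) - 2 * x)
      = x ^ 4 * (1 + 22 * (1 / x) - 87 * (1 / x) ^ 2 + 80 * (1 / x) ^ 3) := by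
    field_simp; ring
  rw [hnum, hden, mul_div_mul_left _ _ (by positivity), mul_div_assoc, sqrt_mul (sq_nonneg _),
    sqrt_sq (by positivity), scaledRadicand]
  ring

lemma Tlines_eq {n : ℕ} (hn : n ≠ 0) :
    Tlines n = 4 * (n - 1) * n * ((2 - 3 * (1 / n)) * (√(4 / 3) + √(8 / 3)) + 2 * (1 / n)) := by
  unfold Tlines
  field_simp
  ring

lemma Tlines_div_tau3 {n : ℕ} (hn : 2 ≤ n) :
    Tlines n / tau3 n (4 * (n - 1)) = ratioFun (1 / n) := by
  have hx : (2 : ℝ) ≤ n := by exact_mod_cast hn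
  rw [Tlines_eq (by omega), tau3_four_mul_sub_one (by omega), ratioFun,
    mul_div_mul_left _ _ (by apply mul_ne_zero <;> linarith)]

lemma scaledRadicand_zero : scaledRadicand 0 = 32 := by
  norm_num [scaledRadicand]

lemma continuousAt_ratioFun : ContinuousAt ratioFun 0 := by
  have hR : ContinuousAt scaledRadicand 0 := by
    unfold scaledRadicand
    exact ContinuousAt.div (by fun_prop) (by fun_prop) (by norm_num)
  unfold ratioFun
  exact ContinuousAt.div (by fun_prop) (continuous_sqrt.continuousAt.comp hR)
    (by rw [scaledRadicand_zero]; positivity)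

lemma ratioFun_zero : ratioFun 0 = 1 / (√6 * (√2 - 1)) := by
  have h2 : √2 ^ 2 = 2 := sq_sqrt (by norm_num)
  have h43 : √(4 / 3) = 2 / √3 := by
    rw [sqrt_div' _ (by norm_num), show (4 : ℝ) = 2 ^ 2 by norm_num, sqrt_sq (by norm_num)]
  have h83 : √(8 / 3) = 2 * √2 / √3 := by
    rw [sqrt_div' _ (by norm_num), show (8 : ℝ) = 2 ^ 2 * 2 by norm_num,
      sqrt_mul (by norm_num), sqrt_sq (by norm_num)]
  have h32 : √32 = 4 * √2 := by
    rw [show (32 : ℝ) = 4 ^ 2 * 2 by norm_num, sqrt_mul (by norm_num), sqrt_sq (by norm_num)]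
  have h6 : √6 = √2 * √3 := by
    rw [← sqrt_mul (by norm_num)]; norm_num
  have h21 : √2 - 1 ≠ 0 := by
    have : 1 < √2 := by rw [lt_sqrt (by norm_num)]; norm_num
    linarith
  rw [ratioFun, scaledRadicand_zero, h43, h83, h32, h6]
  field_simp
  linear_combination 4 * h2

end EquiangularThird

open EquiangularThird in
/-- The ratio of the sum of distances of the `s = 1/3` equiangular-lines codes to the
degree-3 upper bound converges to `1/(√6·(√2 − 1))`. -/
theorem equiangular_third_ratio :
    Tendsto (fun n : ℕ => Tlines n / tau3 n (4 * (n - 1))) atTop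
      (nhds (1 / (Real.sqrt 6 * (Real.sqrt 2 - 1)))) := by
  have hlim : Tendsto (fun n : ℕ => ratioFun (1 / n)) atTop (nhds (ratioFun 0)) :=
    continuousAt_ratioFun.tendsto.comp tendsto_one_div_atTop_nhds_zero_nat
  rw [← ratioFun_zero]
  refine hlim.congr' ?_
  filter_upwards [eventually_ge_atTop 2] with n hn
  exact (Tlines_div_tau3 hn).symm
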